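/- Consistency between field typings and session types is preserved by subtyping on the field side: if F is C-consistent with S (i.e. the pair (F,S) is in the largest C-consistency relation) and F' <: F, then F' is C-consistent with S. -/
import Mathlib


/-!
STATEMENT 1: Consistency between field typings and session types is preserved
by subtyping on the field side: if F ⊢_C S (membership in the largest
C-consistency relation) and F' <: F, then F' ⊢_C S.

The typing condition of the definition of consistency is abstracted by a
predicate `Body`; the assumed monotonicity of the typing judgement under
strengthening of the initial environment (Lemma "moreweak" of the paper) is the
hypothesis `hmono`.
-/

inductive SessionType (Sig : Type) : Type where
  | branch : List (String × Sig × SessionType Sig) → SessionType Sig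
  | variant : List (String × SessionType Sig) → SessionType Sig

inductive FieldTyping (Ty : Type) : Type where
  | record : List (String × Ty) → FieldTyping Ty
  | variant : List (String × FieldTyping Ty) → FieldTyping Ty

def IsConsistency {Ty Sig : Type}
    (Body : String → Sig → FieldTyping Ty → FieldTyping Ty → Prop)
    (R : FieldTyping Ty → SessionType Sig → Prop) : Prop :=
  ∀ F S, R F S →
    (∀ ms, S = SessionType.branch ms →
      (∀ ls, F ≠ FieldTyping.variant ls) ∧
      ∀ m sig S', (m, sig, S') ∈ ms → ∃ F', Body m sig F F' ∧ R F' S') ∧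
    (∀ ls, S = SessionType.variant ls →
      ∃ fs, F = FieldTyping.variant fs ∧
        ∀ l Fl, (l, Fl) ∈ fs → ∃ Sl, (l, Sl) ∈ ls ∧ R Fl Sl)

/-- F ⊢_C S : membership in the largest C-consistency relation, i.e. the union
of all C-consistency relations. -/
def Consistent {Ty Sig : Type}
    (Body : String → Sig → FieldTyping Ty → FieldTyping Ty → Prop)
    (F : FieldTyping Ty) (S : SessionType Sig) : Prop :=
  ∃ R, IsConsistency Body R ∧ R F S

/-- Structural subtyping on field typings: records pointwise on the same field
set, variants with a wider label set in the supertype and componentwise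
subtyping. -/
inductive FieldSub {Ty : Type} (TySub : Ty → Ty → Prop) :
    FieldTyping Ty → FieldTyping Ty → Prop where
  | record {fs fs'} :
      List.Forall₂ (fun a b => a.1 = b.1 ∧ TySub a.2 b.2) fs fs' →
      FieldSub TySub (FieldTyping.record fs) (FieldTyping.record fs')
  | variant {ls ls'} (g : String → FieldTyping Ty → FieldTyping Ty) :
      (∀ l Fl, (l, Fl) ∈ ls → (l, g l Fl) ∈ ls') →
      (∀ l Fl, (l, Fl) ∈ ls → FieldSub TySub Fl (g l Fl)) →
      FieldSub TySub (FieldTyping.variant ls) (FieldTyping.variant ls')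

/-- Soundness of subtyping for fields (Proposition `subfield`). -/
theorem consistency_preserved_by_field_subtyping {Ty Sig : Type}
    (TySub : Ty → Ty → Prop)
    (Body : String → Sig → FieldTyping Ty → FieldTyping Ty → Prop)
    (hmono : ∀ m sig F F' F'', Body m sig F F' → FieldSub TySub F'' F →
      Body m sig F'' F')
    (F F' : FieldTyping Ty) (S : SessionType Sig)
    (hcons : Consistent Body F S) (hsub : FieldSub TySub F' F) :
    Consistent Body F' S := by
  obtain ⟨R, hR, hFS⟩ := hcons
  refine ⟨fun G S => R G S ∨ ∃ F, FieldSub TySub G F ∧ R F S, ?_, Or.inr ⟨F, hsub, hFS⟩⟩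
  intro G S hG
  rcases hG with hG | ⟨F0, hsub0, hF0⟩
  · obtain ⟨hb, hv⟩ := hR G S hG
    refine ⟨fun ms hms => ?_, fun ls hls => ?_⟩
    · obtain ⟨h1, h2⟩ := hb ms hms
      exact ⟨h1, fun m sig S' hmem => by
        obtain ⟨F'', hB, hRF⟩ := h2 m sig S' hmem
        exact ⟨F'', hB, Or.inl hRF⟩⟩
    · obtain ⟨fs, hfs, h2⟩ := hv ls hls
      exact ⟨fs, hfs, fun l Fl hmem => by
        obtain ⟨Sl, hSl, hRF⟩ := h2 l Fl hmem
        exact ⟨Sl, hSl, Or.inl hRF⟩⟩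
  · obtain ⟨hb, hv⟩ := hR F0 S hF0
    refine ⟨fun ms hms => ?_, fun ls hls => ?_⟩
    · obtain ⟨h1, h2⟩ := hb ms hms
      constructor
      · intro ls hGls
        subst hGls
        cases hsub0 with
        | variant g hg1 hg2 => exact h1 _ rfl
      · intro m sig S' hmem
        obtain ⟨F'', hB, hRF⟩ := h2 m sig S' hmem
        exact ⟨F'', hmono m sig F0 F'' G hB hsub0, Or.inl hRF⟩
    · obtain ⟨fs, hfs, h2⟩ := hv ls hls
      subst hfs
      cases hsub0 with
      | @variant ls0 _ g hg1 hg2 =>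
        refine ⟨ls0, rfl, fun l Fl hmem => ?_⟩
        obtain ⟨Sl, hSl, hRF⟩ := h2 l (g l Fl) (hg1 l Fl hmem)
        exact ⟨Sl, hSl, Or.inr ⟨g l Fl, hg2 l Fl hmem, hRF⟩⟩
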